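/- arXiv:1707.03928 — 2 statements merged into one kernel-verified Lean document; each statement's English description precedes it below -/
import Mathlib

section
/- Let n be a positive integer and let A = {a_1, a_2, …, a_n} be a multiset of positive integers with a_1 + a_2 + … + a_n = n². Then A is an extremal multi Skolem set (i.e., the set {1, 2, …, 2n} can be partitioned into n pairs (s_i, t_i) whose differences t_i − s_i form the multiset A) if and only if there exists a permutation π of {1, …, n} such that for every k ∈ {1, …, 2n−1}, the entry d_k of the diagonal X-ray d(π) equals the multiplicity of k in A (equivalently, the Toeplitz characteristic of π equals the nondecreasing arrangement of A). -/
/-!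
A pairing of `{1, …, 2n}` has total length at most `n²`: for every pair `s < t`,
`2 (t - s) ≤ |2s - (2n+1)| + |2t - (2n+1)|`, and the right-hand side summed over all `2n`
endpoints is `2n²`. Equality holds exactly when every pair straddles the middle, `s ≤ n < t`.
Straddling pairings are the pairings `(i, n + π i)` for permutations `π` of `{1, …, n}`; their
differences form the multiset `{n + π i - i}`, whose multiplicity of `k` is the X-ray entry `d_k`.
-/

/-- The multiset of all endpoints of the pairs `(s i, t i)`. -/
def pairsMultiset (n : ℕ) (s t : Fin n → ℕ) : Multiset ℕ :=
  (Finset.univ : Finset (Fin n)).val.bind fun i => {s i, t i}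

/-- The pairs `(s i, t i)` form a partition of `{1, 2, …, 2n}`. -/
def IsPartitionOfIcc (n : ℕ) (s t : Fin n → ℕ) : Prop :=
  pairsMultiset n s t = Multiset.map (· + 1) (Multiset.range (2 * n))

/-- The `k`-th entry (`k = 1, …, 2n-1`) of the diagonal (Toeplitz) X-ray of a
permutation `π` of `{1, …, n}` (encoded 0-based on `Fin n`):
`d_k = #{i : i - π(i) = n - k}`. -/
def diagXray (n : ℕ) (π : Equiv.Perm (Fin n)) (k : ℤ) : ℕ :=
  (Finset.univ.filter fun i : Fin n =>
    ((i : ℕ) : ℤ) - ((π i : ℕ) : ℤ) = (n : ℤ) - k).card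

open Finset

/-- The Toeplitz characteristic of `π`, as a multiset: `d_k` is the multiplicity of `k` in it. -/
def toeplitzCharacteristic (n : ℕ) (π : Equiv.Perm (Fin n)) : Multiset ℕ :=
  (univ : Finset (Fin n)).val.map fun i => n + π i - i

theorem diagXray_eq_count_toeplitzCharacteristic {n : ℕ} (π : Equiv.Perm (Fin n)) (k : ℕ) :
    diagXray n π k = (toeplitzCharacteristic n π).count k := by
  rw [toeplitzCharacteristic, Multiset.count_map]
  refine congrArg Finset.card (filter_congr fun i _ => ?_)
  have := i.isLt
  omega

theorem mem_toeplitzCharacteristic {n : ℕ} {π : Equiv.Perm (Fin n)} {k : ℕ}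
    (hk : k ∈ toeplitzCharacteristic n π) : 1 ≤ k ∧ k ≤ 2 * n - 1 := by
  obtain ⟨i, -, rfl⟩ := Multiset.mem_map.mp hk
  have := i.isLt
  have := (π i).isLt
  omega

theorem Multiset.eq_of_count_eq_of_card_le {α : Type*} [DecidableEq α] {p : α → Prop}
    [DecidablePred p] {s t : Multiset α} (hs : ∀ x ∈ s, p x) (hcard : card t ≤ card s)
    (hcount : ∀ x, p x → s.count x = t.count x) : s = t := by
  have hfilter : s = t.filter p := by
    ext x
    rw [count_filter]
    split_ifs with hx
    · exact hcount x hx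
    · exact count_eq_zero.mpr fun hmem => hx (hs x hmem)
  rw [hfilter] at hcard ⊢
  exact eq_of_le_of_card_le (filter_le p t) hcard

theorem pairsMultiset_eq (n : ℕ) (s t : Fin n → ℕ) :
    pairsMultiset n s t = (univ : Finset (Fin n)).val.map s + (univ : Finset (Fin n)).val.map t := by
  simp only [pairsMultiset, Multiset.insert_eq_cons, ← Multiset.singleton_add,
    Multiset.bind_add, Multiset.bind_singleton]

theorem sum_range_abs_two_mul_add_one_sub (n : ℕ) :
    ∑ j ∈ range (2 * n), |2 * (j : ℤ) + 1 - 2 * n| = 2 * (n : ℤ) ^ 2 := by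
  induction n with
  | zero => simp
  | succ n ih =>
    rw [show 2 * (n + 1) = 2 * n + 1 + 1 by ring, sum_range_succ', sum_range_succ]
    push_cast
    have hshift : ∀ j ∈ range (2 * n), |2 * ((j : ℤ) + 1) + 1 - 2 * (n + 1)| =
        |2 * (j : ℤ) + 1 - 2 * n| := fun j _ => by ring_nf
    rw [sum_congr rfl hshift, ih, abs_of_nonneg (by omega), abs_of_neg (by omega)]
    ring

theorem two_mul_sub_le_abs_add_abs (n s t : ℕ) :
    2 * ((t : ℤ) - s) ≤ |2 * (s : ℤ) - (2 * n + 1)| + |2 * (t : ℤ) - (2 * n + 1)| := by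
  have := le_abs_self (2 * (t : ℤ) - (2 * n + 1))
  have := neg_abs_le (2 * (s : ℤ) - (2 * n + 1))
  linarith

theorem le_and_lt_of_two_mul_sub_eq_abs_add_abs {n s t : ℕ}
    (h : 2 * ((t : ℤ) - s) = |2 * (s : ℤ) - (2 * n + 1)| + |2 * (t : ℤ) - (2 * n + 1)|) :
    s ≤ n ∧ n < t := by
  rcases abs_cases (2 * (s : ℤ) - (2 * n + 1)) with ⟨hs, hs'⟩ | ⟨hs, hs'⟩ <;>
    rcases abs_cases (2 * (t : ℤ) - (2 * n + 1)) with ⟨ht, ht'⟩ | ⟨ht, ht'⟩ <;>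
    rw [hs, ht] at h <;> omega

namespace IsPartitionOfIcc

variable {n : ℕ} {s t : Fin n → ℕ}

theorem endpoints_eq (h : IsPartitionOfIcc n s t) :
    (univ : Finset (Fin n)).val.map s + (univ : Finset (Fin n)).val.map t =
      (Multiset.range (2 * n)).map (· + 1) := by
  rw [← pairsMultiset_eq]
  exact h

theorem mem_Icc_of_mem (h : IsPartitionOfIcc n s t) {x : ℕ}
    (hx : x ∈ (univ : Finset (Fin n)).val.map s + (univ : Finset (Fin n)).val.map t) :
    x ∈ Icc 1 (2 * n) := by
  rw [h.endpoints_eq, Multiset.mem_map] at hx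
  obtain ⟨j, hj, rfl⟩ := hx
  rw [Multiset.mem_range] at hj
  rw [mem_Icc]
  omega

theorem one_le_left (h : IsPartitionOfIcc n s t) (i : Fin n) : 1 ≤ s i :=
  (mem_Icc.mp <| h.mem_Icc_of_mem <|
    Multiset.mem_add.mpr <| .inl <| Multiset.mem_map_of_mem s (mem_univ i)).1

theorem right_le (h : IsPartitionOfIcc n s t) (i : Fin n) : t i ≤ 2 * n :=
  (mem_Icc.mp <| h.mem_Icc_of_mem <|
    Multiset.mem_add.mpr <| .inr <| Multiset.mem_map_of_mem t (mem_univ i)).2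

theorem injective_left_and_right (h : IsPartitionOfIcc n s t) :
    Function.Injective s ∧ Function.Injective t := by
  have hnodup : ((Multiset.range (2 * n)).map (· + 1)).Nodup :=
    (Multiset.nodup_range _).map (add_left_injective 1)
  rw [← h.endpoints_eq, Multiset.nodup_add] at hnodup
  exact ⟨Fintype.nodup_map_univ_iff_injective.mp hnodup.1,
    Fintype.nodup_map_univ_iff_injective.mp hnodup.2.1⟩

theorem sum_add {M : Type*} [AddCommMonoid M] (h : IsPartitionOfIcc n s t) (f : ℕ → M) :
    ∑ i, (f (s i) + f (t i)) = ∑ j ∈ range (2 * n), f (j + 1) := by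
  have := congrArg (fun m => (m.map f).sum) h.endpoints_eq
  rw [sum_add_distrib, sum_eq_multiset_sum, sum_eq_multiset_sum, sum_eq_multiset_sum, range_val]
  simpa only [Multiset.map_add, Multiset.sum_add, Multiset.map_map, Function.comp_def] using this

theorem straddle (h : IsPartitionOfIcc n s t) (hlt : ∀ i, s i < t i)
    (hsum : ∑ i, (t i - s i) = n ^ 2) (i : Fin n) : s i ≤ n ∧ n < t i := by
  have hsumZ : ∑ i, ((t i : ℤ) - s i) = (n : ℤ) ^ 2 := by
    rw [← sum_congr rfl fun i _ => Nat.cast_sub (hlt i).le]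
    exact_mod_cast hsum
  have heq : ∑ i, 2 * ((t i : ℤ) - s i) =
      ∑ i, (|2 * (s i : ℤ) - (2 * n + 1)| + |2 * (t i : ℤ) - (2 * n + 1)|) := by
    rw [h.sum_add fun x => |2 * (x : ℤ) - (2 * n + 1)|, ← mul_sum, hsumZ,
      ← sum_range_abs_two_mul_add_one_sub n]
    refine sum_congr rfl fun j _ => ?_
    push_cast
    ring_nf
  exact le_and_lt_of_two_mul_sub_eq_abs_add_abs <|
    (sum_eq_sum_iff_of_le fun i _ => two_mul_sub_le_abs_add_abs n (s i) (t i)).mp heq i (mem_univ i)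

theorem exists_perm_of_straddle (h : IsPartitionOfIcc n s t)
    (hst : ∀ i, s i ≤ n ∧ n < t i) :
    ∃ π : Equiv.Perm (Fin n),
      (univ : Finset (Fin n)).val.map (fun i => t i - s i) = toeplitzCharacteristic n π := by
  have hσlt : ∀ i, s i - 1 < n := fun i => by have := (hst i).1; have := h.one_le_left i; omega
  have hτlt : ∀ i, t i - (n + 1) < n := fun i => by
    have := (hst i).2; have := h.right_le i; omega
  let σ : Fin n → Fin n := fun i => ⟨s i - 1, hσlt i⟩
  let τ : Fin n → Fin n := fun i => ⟨t i - (n + 1), hτlt i⟩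
  have hσ : Function.Injective σ := fun x y hxy => by
    have := h.one_le_left x; have := h.one_le_left y
    exact h.injective_left_and_right.1 (by simp only [σ, Fin.mk.injEq] at hxy; omega)
  have hτ : Function.Injective τ := fun x y hxy => by
    have := (hst x).2; have := (hst y).2
    exact h.injective_left_and_right.2 (by simp only [τ, Fin.mk.injEq] at hxy; omega)
  let eσ := Equiv.ofBijective σ hσ.bijective_of_finite
  let eτ := Equiv.ofBijective τ hτ.bijective_of_finite
  refine ⟨eσ.symm.trans eτ, ?_⟩
  conv_rhs => rw [toeplitzCharacteristic, ← Multiset.map_univ_val_equiv eσ, Multiset.map_map]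
  refine Multiset.map_congr rfl fun i _ => ?_
  have := (hst i).2
  have := h.one_le_left i
  simp [eσ, eτ, σ, τ]
  omega

end IsPartitionOfIcc

theorem isPartitionOfIcc_of_perm {n : ℕ} (π : Equiv.Perm (Fin n)) :
    IsPartitionOfIcc n (fun i => i + 1) (fun i => n + π i + 1) := by
  have hval : (univ : Finset (Fin n)).val.map Fin.val = Multiset.range n := by
    rw [Fin.univ_val_map, List.ofFn_eq_map, List.map_coe_finRange_eq_range]
    rfl
  rw [IsPartitionOfIcc, pairsMultiset_eq, two_mul, Multiset.range_add, Multiset.map_add,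
    Multiset.map_map, ← hval, Multiset.map_map]
  congr 1
  conv_rhs => rw [← Multiset.map_univ_val_equiv π, Multiset.map_map, Multiset.map_map]
  rfl

theorem stmt1_general (n : ℕ) (a : Fin n → ℕ) (ha_sum : ∑ i, a i = n ^ 2) :
    (∃ s t : Fin n → ℕ, IsPartitionOfIcc n s t ∧ (∀ i, s i < t i) ∧
        Multiset.map (fun i => t i - s i) (Finset.univ : Finset (Fin n)).val =
          Multiset.map a (Finset.univ : Finset (Fin n)).val) ↔
      ∃ π : Equiv.Perm (Fin n), ∀ k : ℕ, 1 ≤ k → k ≤ 2 * n - 1 →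
        diagXray n π k =
          Multiset.count k (Multiset.map a (Finset.univ : Finset (Fin n)).val) := by
  constructor
  · rintro ⟨s, t, hpart, hlt, hdiff⟩
    have hsum : ∑ i, (t i - s i) = n ^ 2 := ha_sum ▸ congrArg Multiset.sum hdiff
    obtain ⟨π, hπ⟩ := hpart.exists_perm_of_straddle (hpart.straddle hlt hsum)
    exact ⟨π, fun k _ _ => by rw [diagXray_eq_count_toeplitzCharacteristic, ← hπ, hdiff]⟩
  · rintro ⟨π, hπ⟩
    have hchar : toeplitzCharacteristic n π = (univ : Finset (Fin n)).val.map a :=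
      Multiset.eq_of_count_eq_of_card_le (fun _ => mem_toeplitzCharacteristic)
        (by simp [toeplitzCharacteristic])
        fun k hk => by rw [← diagXray_eq_count_toeplitzCharacteristic, hπ k hk.1 hk.2]
    refine ⟨_, _, isPartitionOfIcc_of_perm π, fun i => by omega, ?_⟩
    rw [← hchar, toeplitzCharacteristic]
    exact Multiset.map_congr rfl fun i _ => by omega

theorem stmt1 (n : ℕ) (hn : 0 < n) (a : Fin n → ℕ)
    (ha_pos : ∀ i, 0 < a i) (ha_sum : ∑ i, a i = n ^ 2) :
    (∃ s t : Fin n → ℕ, IsPartitionOfIcc n s t ∧ (∀ i, s i < t i) ∧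
        Multiset.map (fun i => t i - s i) (Finset.univ : Finset (Fin n)).val =
          Multiset.map a (Finset.univ : Finset (Fin n)).val) ↔
      ∃ π : Equiv.Perm (Fin n), ∀ k : ℕ, 1 ≤ k → k ≤ 2 * n - 1 →
        diagXray n π k =
          Multiset.count k (Multiset.map a (Finset.univ : Finset (Fin n)).val) :=
  stmt1_general n a ha_sum
end

section
/- For every positive integer n, the set {1, 2, …, 2n} can be partitioned into n pairs (s_i, t_i) with t_i − s_i = i for i = 1, 2, …, n if and only if n ≡ 0 (mod 4) or n ≡ 1 (mod 4). -/
/-!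
Adding up all pairs gives `2 ∑ sᵢ + n(n+1)/2 = n(2n+1)`, so `n(n+1)/2 ≡ n (mod 2)`, which forces
`n ≡ 0, 1 (mod 4)`. Conversely, Skolem's explicit construction works for every such `n` except
`n = 5`, which is done by hand.
-/

open Finset

lemma pairsMultiset_eq_add (n : ℕ) (s t : Fin n → ℕ) :
    pairsMultiset n s t = univ.val.map s + univ.val.map t := by
  rw [pairsMultiset, ← Multiset.bind_singleton univ.val s, ← Multiset.bind_singleton univ.val t,
    ← Multiset.bind_add]
  rfl

lemma sum_range_succ_mul_two (N : ℕ) : (∑ i ∈ range N, (i + 1)) * 2 = N * (N + 1) := by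
  rw [mul_comm N]
  simpa [sum_range_succ'] using sum_range_id_mul_two (N + 1)

lemma IsPartitionOfIcc.four_mul_sum_add {n : ℕ} {s t : Fin n → ℕ} (h : IsPartitionOfIcc n s t)
    (ht : ∀ i, t i = s i + ((i : ℕ) + 1)) :
    4 * ∑ i, s i + n * (n + 1) = 2 * n * (2 * n + 1) := by
  have hsum : ∑ i, s i + ∑ i, t i = ∑ k ∈ range (2 * n), (k + 1) := by
    simpa [sum_eq_multiset_sum, pairsMultiset_eq_add] using congrArg Multiset.sum h
  have hdiff : ∑ i, t i = ∑ i, s i + ∑ i ∈ range n, (i + 1) := by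
    rw [← Fin.sum_univ_eq_sum_range (· + 1), ← sum_add_distrib]
    exact sum_congr rfl fun i _ => ht i
  have := sum_range_succ_mul_two n
  have := sum_range_succ_mul_two (2 * n)
  omega

lemma mod_four_eq_zero_or_one_of_four_mul_add_eq {n S : ℕ} (h : 4 * S + n * (n + 1) = 2 * n * (2 * n + 1)) :
    n % 4 = 0 ∨ n % 4 = 1 := by
  obtain ⟨q, k, hk, rfl⟩ : ∃ q k, k < 4 ∧ n = 4 * q + k :=
    ⟨n / 4, n % 4, Nat.mod_lt _ (by norm_num), (Nat.div_add_mod n 4).symm⟩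
  interval_cases k <;> ring_nf at h <;> omega

lemma isPartitionOfIcc_of_nodup {n : ℕ} {s t : Fin n → ℕ} (hnodup : (pairsMultiset n s t).Nodup)
    (hmem : ∀ x ∈ pairsMultiset n s t, 1 ≤ x ∧ x ≤ 2 * n) : IsPartitionOfIcc n s t := by
  refine Multiset.eq_of_le_of_card_le ((Multiset.le_iff_subset hnodup).2 fun x hx => ?_) ?_
  · obtain ⟨h1, h2⟩ := hmem x hx
    exact Multiset.mem_map.2 ⟨x - 1, Multiset.mem_range.2 (by omega), by omega⟩
  · simp only [pairsMultiset_eq_add, Multiset.card_add, Multiset.card_map, Multiset.card_range,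
      card_val, card_univ, Fintype.card_fin]
    omega

/-- The pair with difference `d` is `(f d, f d + d)`. -/
def IsSkolemStart (n : ℕ) (f : ℕ → ℕ) : Prop :=
  ∀ d ∈ Icc 1 n, ∀ e ∈ Icc 1 n,
    1 ≤ f d ∧ f d + d ≤ 2 * n ∧ f d ≠ f e + e ∧ (d ≠ e → f d ≠ f e ∧ f d + d ≠ f e + e)

lemma IsSkolemStart.isPartitionOfIcc {n : ℕ} {f : ℕ → ℕ} (hf : IsSkolemStart n f) :
    IsPartitionOfIcc n (fun i => f (i + 1)) (fun i => f (i + 1) + (i + 1)) := by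
  have hf' (i j : Fin n) := hf (i + 1) (by simp) (j + 1) (by simp)
  have hval {i j : Fin n} (hij : i ≠ j) : (i : ℕ) + 1 ≠ j + 1 := by simpa [Fin.val_inj] using hij
  apply isPartitionOfIcc_of_nodup
  · rw [pairsMultiset_eq_add, Multiset.nodup_add]
    refine ⟨Multiset.Nodup.map_on (fun i _ j _ hij => ?_) univ.nodup,
      Multiset.Nodup.map_on (fun i _ j _ hij => ?_) univ.nodup,
      Multiset.disjoint_left.2 fun hs ht => ?_⟩
    · by_contra hne; exact ((hf' i j).2.2.2 (hval hne)).1 hij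
    · by_contra hne; exact ((hf' i j).2.2.2 (hval hne)).2 hij
    · obtain ⟨i, -, rfl⟩ := Multiset.mem_map.1 hs
      obtain ⟨j, -, hj⟩ := Multiset.mem_map.1 ht
      exact (hf' i j).2.2.1 hj.symm
  · intro x hx
    rw [pairsMultiset_eq_add, Multiset.mem_add, Multiset.mem_map, Multiset.mem_map] at hx
    rcases hx with ⟨i, -, rfl⟩ | ⟨i, -, rfl⟩ <;> have := hf' i i <;> omega

/-- Skolem's construction for `n = 4m + r`, `r ∈ {0, 1}`: the even differences are nested around
`2m + 1`, the odd ones around `6m + r + 1/2` and `6m + r + 3/2`, except for the differences `1`,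
`2m - 1` and `4m + 2r - 1`, which are placed separately. -/
def skolemStart (m r d : ℕ) : ℕ :=
  if d % 2 = 0 then 2 * m + 1 - d / 2
  else if d = 1 then 7 * m + r
  else if d = 4 * m + 2 * r - 1 then 2 * m + 1
  else if d < 2 * m - 1 then (12 * m + 2 * r + 1 - d) / 2
  else if d = 2 * m - 1 then 4 * m + 2
  else (12 * m + 2 * r + 3 - d) / 2

lemma isSkolemStart_skolemStart {m r : ℕ} (hr : r = 0 ∨ r = 1 ∧ m ≠ 1) :
    IsSkolemStart (4 * m + r) (skolemStart m r) := by
  intro d hd e he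
  rw [mem_Icc] at hd he
  unfold skolemStart
  split_ifs <;> omega

theorem stmt6_general (n : ℕ) :
    (∃ s t : Fin n → ℕ, IsPartitionOfIcc n s t ∧ ∀ i, t i = s i + ((i : ℕ) + 1)) ↔
      n % 4 = 0 ∨ n % 4 = 1 := by
  constructor
  · rintro ⟨s, t, hpart, ht⟩
    exact mod_four_eq_zero_or_one_of_four_mul_add_eq (hpart.four_mul_sum_add ht)
  · intro hn
    rcases eq_or_ne n 5 with rfl | h5
    · exact ⟨![9, 2, 5, 3, 1], ![10, 4, 8, 7, 6], by unfold IsPartitionOfIcc pairsMultiset; decide,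
        by decide⟩
    obtain ⟨m, r, hr, rfl⟩ : ∃ m r, (r = 0 ∨ r = 1 ∧ m ≠ 1) ∧ n = 4 * m + r :=
      ⟨n / 4, n % 4, by omega, (Nat.div_add_mod n 4).symm⟩
    exact ⟨_, _, (isSkolemStart_skolemStart hr).isPartitionOfIcc, fun _ => rfl⟩

theorem stmt6 (n : ℕ) (hn : 0 < n) :
    (∃ s t : Fin n → ℕ, IsPartitionOfIcc n s t ∧ ∀ i, t i = s i + ((i : ℕ) + 1)) ↔
      n % 4 = 0 ∨ n % 4 = 1 :=
  stmt6_general n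
end
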